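/- arXiv:1309.6296 — 2 statements merged into one kernel-verified Lean document; each statement's English description precedes it below -/
import Mathlib

section
/- Let (G, d) be a metric space with a measure whose balls satisfy volume doubling V(x, 2r) ≤ C_{VD} V(x, r), where every ball has finite positive volume. Suppose a norm structure is 'well-connected': there is b > 0 such that for every r > 0 and x with ‖x‖ ≤ r there is a finite chain e = x₀, x₁, …, x_N = x with ‖xᵢ‖ ≤ 2r and ‖xᵢ⁻¹x_{i+1}‖ ≤ b. Then for every ε > 0 there exists M_ε such that for all r ≥ 8b/ε and every x with ‖x‖ ≤ r there exist points z₀ = e, z₁, …, z_M = x with M ≤ M_ε and ‖zᵢ⁻¹z_{i+1}‖ ≤ εr for all i. -/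
/-!
Put `s = εr/8`. A maximal `2s`-separated subset `Y` of the ball of radius `2r` is a `2s`-net of
that ball. The balls of radius `s` around the points of `Y` are disjoint and lie in the ball of
radius `2r + s ≤ 2^m s`, where `2^m ≥ 16/ε + 1`, so doubling gives `#Y ≤ CVD^m`. Moving every
point of a `b`-chain from `1` to `x` to a nearby point of `Y` gives a chain through
`{1, x} ∪ Y` with steps at most `4s + b ≤ εr`, and cutting out its loops leaves at most
`#Y + 1` steps.
-/

theorem SimpleGraph.Reachable.exists_chain {V : Type*} [Finite V] {H : SimpleGraph V} {u v : V}
    (h : H.Reachable u v) :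
    ∃ (M : ℕ) (z : ℕ → V), M < Nat.card V ∧ z 0 = u ∧ z M = v ∧
      ∀ i < M, H.Adj (z i) (z (i + 1)) := by
  classical
  have := Fintype.ofFinite V
  obtain ⟨q, hq⟩ := h.some.toPath
  exact ⟨q.length, q.getVert, Nat.card_eq_fintype_card (α := V) ▸ hq.length_lt,
    q.getVert_zero, q.getVert_length, fun i hi => q.adj_getVert_succ hi⟩

theorem SimpleGraph.reachable_fromRel_of_rel {V : Type*} {r : V → V → Prop} {a b : V}
    (h : r a b) : (SimpleGraph.fromRel r).Reachable a b := by
  obtain rfl | hab := eq_or_ne a b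
  · rfl
  · exact SimpleGraph.Adj.reachable ((SimpleGraph.fromRel_adj r a b).2 ⟨hab, .inl h⟩)

theorem SetRel.exists_isSeparated_isCover {X : Type*} {U : SetRel X X} [U.IsRefl] [U.IsSymm]
    {s : Set X} (hs : s.Finite) : ∃ N ⊆ s, IsSeparated U N ∧ IsCover U s N := by
  obtain ⟨N, hN⟩ := (hs.finite_subsets.subset fun N (hN : N ⊆ s ∧ IsSeparated U N) => hN.1)
    |>.exists_maximal ⟨∅, Set.empty_subset s, .empty⟩
  exact ⟨N, hN.1.1, hN.1.2, .of_maximal_isSeparated hN⟩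

theorem le_pow_mul_of_doubling {V : ℝ → ℝ} {C : ℝ} (hC : 0 ≤ C)
    (hV : ∀ t, 0 < t → V (2 * t) ≤ C * V t) (k : ℕ) {t : ℝ} (ht : 0 < t) :
    V (2 ^ k * t) ≤ C ^ k * V t := by
  induction k with
  | zero => simp
  | succ k ih =>
    calc V (2 ^ (k + 1) * t) = V (2 * (2 ^ k * t)) := by ring_nf
      _ ≤ C * V (2 ^ k * t) := hV _ (by positivity)
      _ ≤ C * (C ^ k * V t) := mul_le_mul_of_nonneg_left ih hC
      _ = C ^ (k + 1) * V t := by ring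

namespace GroupSeminorm

open Set SetRel

variable {G : Type*} [Group G] (p : GroupSeminorm G)

theorem map_inv_mul_rev (a b : G) : p (a⁻¹ * b) = p (b⁻¹ * a) := by
  rw [← map_inv_eq_map p, mul_inv_rev, _root_.inv_inv]

theorem map_inv_mul_le_add (a b c : G) : p (a⁻¹ * c) ≤ p (a⁻¹ * b) + p (b⁻¹ * c) := by
  simpa only [mul_assoc, mul_inv_cancel_left] using map_mul_le_add p (a⁻¹ * b) (b⁻¹ * c)

def closeRel (δ : ℝ) : SetRel G G := {q | p (q.1⁻¹ * q.2) ≤ δ}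

instance (δ : ℝ) : (p.closeRel δ).IsSymm where
  symm a b h := (p.map_inv_mul_rev b a).trans_le h

theorem isRefl_closeRel {δ : ℝ} (hδ : 0 ≤ δ) : (p.closeRel δ).IsRefl where
  refl a := by simpa [closeRel] using hδ

theorem ncard_mul_ncard_le_of_isSeparated {Y : Set G} {R s : ℝ}
    (hfin : {g | p g ≤ R + s}.Finite) (hY : ∀ y ∈ Y, p y ≤ R)
    (hsep : IsSeparated (p.closeRel (2 * s)) Y) :
    Y.ncard * {g | p g ≤ s}.ncard ≤ {g | p g ≤ R + s}.ncard := by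
  rw [← ncard_prod]
  refine ncard_le_ncard_of_injOn (fun q => q.1 * q.2) ?_ ?_ hfin
  · rintro ⟨y, g⟩ ⟨hy, hg⟩
    exact (map_mul_le_add p y g).trans (add_le_add (hY y hy) hg)
  · rintro ⟨y₁, g₁⟩ ⟨hy₁, hg₁⟩ ⟨y₂, g₂⟩ ⟨hy₂, hg₂⟩ (h : y₁ * g₁ = y₂ * g₂)
    have hy : y₁ = y₂ := by
      by_contra hne
      refine hsep hy₁ hy₂ hne ?_
      have : y₁⁻¹ * y₂ = g₁ * g₂⁻¹ := by
        rw [inv_mul_eq_iff_eq_mul, ← mul_assoc, h, mul_inv_cancel_right]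
      show p (y₁⁻¹ * y₂) ≤ 2 * s
      rw [this, two_mul]
      exact (map_mul_le_add p _ _).trans (add_le_add hg₁ ((map_inv_eq_map p g₂).trans_le hg₂))
    subst hy
    rw [mul_left_cancel h]

theorem ncard_le_pow_of_isSeparated (hfin : ∀ r, {g | p g ≤ r}.Finite) {C : ℝ}
    (hdoubling : ∀ r, 0 < r →
      ({g | p g ≤ 2 * r}.ncard : ℝ) ≤ C * ({g | p g ≤ r}.ncard : ℝ))
    {Y : Set G} {R s : ℝ} {m : ℕ} (hs : 0 < s) (hRs : R + s ≤ 2 ^ m * s)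
    (hY : ∀ y ∈ Y, p y ≤ R) (hsep : IsSeparated (p.closeRel (2 * s)) Y) :
    (Y.ncard : ℝ) ≤ C ^ m := by
  have hpos : ∀ t, 0 ≤ t → (0 : ℝ) < {g | p g ≤ t}.ncard := fun t ht =>
    Nat.cast_pos.2 ((ncard_pos (hfin t)).2 ⟨1, by simpa using ht⟩)
  have hC : 0 ≤ C := nonneg_of_mul_nonneg_left
    ((Nat.cast_nonneg _).trans (hdoubling 1 one_pos)) (hpos 1 zero_le_one)
  refine le_of_mul_le_mul_right ?_ (hpos s hs.le)
  calc (Y.ncard : ℝ) * {g | p g ≤ s}.ncard ≤ {g | p g ≤ R + s}.ncard := by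
        exact_mod_cast p.ncard_mul_ncard_le_of_isSeparated (hfin _) hY hsep
    _ ≤ {g | p g ≤ 2 ^ m * s}.ncard := by
        exact_mod_cast ncard_le_ncard (fun g (hg : p g ≤ R + s) => hg.trans hRs) (hfin _)
    _ ≤ C ^ m * {g | p g ≤ s}.ncard :=
        le_pow_mul_of_doubling (V := fun t => ({g | p g ≤ t}.ncard : ℝ)) hC hdoubling m hs

def stepGraph (S : Set G) (ρ : ℝ) : SimpleGraph S :=
  SimpleGraph.fromRel fun a b => p ((a : G)⁻¹ * b) ≤ ρ

theorem stepGraph_reachable_of_le {S : Set G} {ρ : ℝ} {a b : S} (h : p ((a : G)⁻¹ * b) ≤ ρ) :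
    (p.stepGraph S ρ).Reachable a b :=
  SimpleGraph.reachable_fromRel_of_rel h

theorem exists_chain_of_stepGraph_reachable {S : Set G} (hS : S.Finite) {ρ : ℝ} {a b : S}
    (h : (p.stepGraph S ρ).Reachable a b) :
    ∃ (M : ℕ) (z : ℕ → G), M < S.ncard ∧ z 0 = a ∧ z M = b ∧
      ∀ i < M, p ((z i)⁻¹ * z (i + 1)) ≤ ρ := by
  have := hS.to_subtype
  obtain ⟨M, z, hM, hz0, hzM, hadj⟩ := h.exists_chain
  refine ⟨M, fun i => z i, by rwa [← Nat.card_coe_set_eq], congrArg Subtype.val hz0,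
    congrArg Subtype.val hzM, fun i hi => ?_⟩
  obtain ⟨-, h | h⟩ := (SimpleGraph.fromRel_adj _ _ _).1 (hadj i hi)
  · exact h
  · exact (p.map_inv_mul_rev _ _).trans_le h

theorem stepGraph_reachable_of_chain_near {Y : Set G} {x : G} {n : ℕ} {z : ℕ → G} {b δ ρ : ℝ}
    (hz0 : z 0 = 1) (hzn : z n = x) (hstep : ∀ i < n, p ((z i)⁻¹ * z (i + 1)) ≤ b)
    (hY : ∀ i ≤ n, ∃ y ∈ Y, p ((z i)⁻¹ * y) ≤ δ) (hδ : 0 ≤ δ) (hb : 0 ≤ b)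
    (hρ : 2 * δ + b ≤ ρ) :
    (p.stepGraph (insert 1 (insert x Y)) ρ).Reachable ⟨1, mem_insert _ _⟩
      ⟨x, mem_insert_of_mem _ (mem_insert _ _)⟩ := by
  have key : ∀ k ≤ n, ∃ (y : G) (hy : y ∈ insert 1 (insert x Y)), p ((z k)⁻¹ * y) ≤ δ ∧
      (p.stepGraph _ ρ).Reachable ⟨1, mem_insert _ _⟩ ⟨y, hy⟩ := by
    intro k hk
    induction k with
    | zero => exact ⟨1, mem_insert _ _, by simpa [hz0] using hδ, .rfl⟩
    | succ k ih =>
      obtain ⟨y, hyS, hy, hreach⟩ := ih (by omega)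
      obtain ⟨y', hy'Y, hy'⟩ := hY (k + 1) hk
      refine ⟨y', mem_insert_of_mem _ (mem_insert_of_mem _ hy'Y), hy',
        hreach.trans (p.stepGraph_reachable_of_le ?_)⟩
      calc p (y⁻¹ * y') ≤ p (y⁻¹ * z k) + p ((z k)⁻¹ * z (k + 1)) + p ((z (k + 1))⁻¹ * y') := by
            linarith [p.map_inv_mul_le_add y (z k) (z (k + 1)),
              p.map_inv_mul_le_add y (z (k + 1)) y']
        _ ≤ δ + b + δ := by
            gcongr
            · exact (p.map_inv_mul_rev _ _).trans_le hy
            · exact hstep k hk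
        _ ≤ ρ := by linarith
  obtain ⟨y, _, hy, hreach⟩ := key n le_rfl
  refine hreach.trans (p.stepGraph_reachable_of_le ?_)
  rw [hzn] at hy
  exact (p.map_inv_mul_rev y x).trans_le (by linarith)

end GroupSeminorm

theorem wellConnected_short_chains_general {G : Type*} [Group G]
    (N : G → ℝ)
    (hzero : ∀ g, N g = 0 ↔ g = 1)
    (hsub : ∀ g h, N (g * h) ≤ N g + N h)
    (hNsymm : ∀ g, N g⁻¹ = N g)
    (hfin : ∀ r : ℝ, {g : G | N g ≤ r}.Finite)
    (CVD : ℝ)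
    (hdoubling : ∀ r : ℝ, 0 < r →
      ({g : G | N g ≤ 2 * r}.ncard : ℝ) ≤ CVD * ({g : G | N g ≤ r}.ncard : ℝ))
    (b : ℝ) (hb : 0 < b)
    (hwc : ∀ r : ℝ, 0 < r → ∀ x : G, N x ≤ r →
      ∃ (n : ℕ) (z : ℕ → G), z 0 = 1 ∧ z n = x ∧
        (∀ i ≤ n, N (z i) ≤ 2 * r) ∧
        (∀ i < n, N ((z i)⁻¹ * z (i + 1)) ≤ b)) :
    ∀ ε : ℝ, 0 < ε → ∃ Mε : ℕ, ∀ r : ℝ, 8 * b / ε ≤ r → ∀ x : G, N x ≤ r →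
      ∃ (M : ℕ) (z : ℕ → G), M ≤ Mε ∧ z 0 = 1 ∧ z M = x ∧
        ∀ i < M, N ((z i)⁻¹ * z (i + 1)) ≤ ε * r := by
  let p : GroupSeminorm G := ⟨N, (hzero 1).2 rfl, hsub, hNsymm⟩
  intro ε hε
  obtain ⟨m, hm⟩ := pow_unbounded_of_one_lt (16 / ε + 1) one_lt_two
  refine ⟨⌊CVD ^ m⌋₊ + 2, fun r hr x hx => ?_⟩
  have hr0 : 0 < r := (by positivity : 0 < 8 * b / ε).trans_le hr
  set s := ε * r / 8 with hs_def
  have hs : 0 < s := by positivity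
  have hbs : b ≤ s := by rw [div_le_iff₀ hε] at hr; linarith
  obtain ⟨n, z, hz0, hzn, hzball, hzstep⟩ := hwc r hr0 x hx
  have := p.isRefl_closeRel (by positivity : 0 ≤ 2 * s)
  obtain ⟨Y, hYball, hYsep, hYcover⟩ :=
    SetRel.exists_isSeparated_isCover (U := p.closeRel (2 * s)) (hfin (2 * r))
  have hYcard : Y.ncard ≤ ⌊CVD ^ m⌋₊ := by
    refine Nat.le_floor (p.ncard_le_pow_of_isSeparated hfin hdoubling hs ?_ hYball hYsep)
    calc 2 * r + s = (16 / ε + 1) * s := by rw [hs_def]; field_simp; ring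
      _ ≤ 2 ^ m * s := by gcongr
  have hreach := p.stepGraph_reachable_of_chain_near hz0 hzn hzstep
    (fun i hi => hYcover (hzball i hi)) (by positivity) hb.le
    (by linarith : 2 * (2 * s) + b ≤ ε * r)
  obtain ⟨M, w, hM, hw0, hwM, hwstep⟩ :=
    p.exists_chain_of_stepGraph_reachable (((hfin _).subset hYball).insert _ |>.insert _) hreach
  refine ⟨M, w, ?_, hw0, hwM, hwstep⟩
  have := Set.ncard_insert_le 1 (insert x Y)
  have := Set.ncard_insert_le x Y
  omega

/-- Lemma 3.4: if the norm is well-connected and volume is doubling, then for every `ε > 0`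
there is `M_ε` such that any point of the ball of radius `r ≥ 8b/ε` can be joined to the
identity by a chain of at most `M_ε` steps of size at most `εr`. -/
theorem wellConnected_short_chains {G : Type*} [Group G] [Countable G]
    (N : G → ℝ)
    (hnonneg : ∀ g, 0 ≤ N g)
    (hzero : ∀ g, N g = 0 ↔ g = 1)
    (hsub : ∀ g h, N (g * h) ≤ N g + N h)
    (hNsymm : ∀ g, N g⁻¹ = N g)
    (hfin : ∀ r : ℝ, {g : G | N g ≤ r}.Finite)
    (CVD : ℝ)
    (hdoubling : ∀ r : ℝ, 0 < r →
      ({g : G | N g ≤ 2 * r}.ncard : ℝ) ≤ CVD * ({g : G | N g ≤ r}.ncard : ℝ))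
    (b : ℝ) (hb : 0 < b)
    (hwc : ∀ r : ℝ, 0 < r → ∀ x : G, N x ≤ r →
      ∃ (n : ℕ) (z : ℕ → G), z 0 = 1 ∧ z n = x ∧
        (∀ i ≤ n, N (z i) ≤ 2 * r) ∧
        (∀ i < n, N ((z i)⁻¹ * z (i + 1)) ≤ b)) :
    ∀ ε : ℝ, 0 < ε → ∃ Mε : ℕ, ∀ r : ℝ, 8 * b / ε ≤ r → ∀ x : G, N x ≤ r →
      ∃ (M : ℕ) (z : ℕ → G), M ≤ Mε ∧ z 0 = 1 ∧ z M = x ∧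
        ∀ i < M, N ((z i)⁻¹ * z (i + 1)) ≤ ε * r :=
  wellConnected_short_chains_general N hzero hsub hNsymm hfin CVD hdoubling b hb hwc
end

section
/- Let G be a countable group with norm ‖·‖ and let ν be a symmetric probability measure. Suppose there exist η > 0, c₁ > 0, C₁ with: for all n and x with ‖x‖ ≤ η r(n), c₁ V(r(n))⁻¹ ≤ ν^{(n)}(x), and for all n, x, ν^{(n)}(x) ≤ C₁ V(r(n))⁻¹. Suppose also any x with ‖x‖ ≤ κ r(n) admits a chain e = z₀, …, z_M = x, M ≤ M_κ, with ‖zᵢ⁻¹z_{i+1}‖ ≤ η r(n)/4, and that V is doubling and r is doubling. Then there is c(κ) > 0 such that ν^{(Mn)}(x) ≥ c(κ) V(r(n))⁻¹ for all x with ‖x‖ ≤ κ r(n), via the chaining estimate ν^{(Mn)}(x) ≥ Σ over y₁ ∈ B₁, …, y_M ∈ B_M of ν^{(n)}(y₁)ν^{(n)}(y₁⁻¹y₂)⋯ν^{(n)}(y_M⁻¹x) ≥ c₁^{M+1} V(η r(n)/4)^M V(r(n))^{−M−1}. -/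
open scoped Classical

/-- `n`-fold convolution power of a measure (density) on a countable group. -/
noncomputable def convPow {G : Type*} [Group G] (ν : G → ℝ) : ℕ → G → ℝ
  | 0 => fun g => if g = 1 then 1 else 0
  | n + 1 => fun g => ∑' h : G, ν h * convPow ν n (h⁻¹ * g)

/-- Volume of the ball of radius `s` for the norm `N`. -/
noncomputable def vol {G : Type*} (N : G → ℝ) (s : ℝ) : ℝ :=
  (({g : G | N g ≤ s}).ncard : ℝ)

open scoped ENNReal

/-
Chaining. Write `B(w, s) = {y : N (w⁻¹ * y) ≤ s}`; by left invariance every such ball has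
`V(s)` points. If `N y ≤ 3s` forces `ν^{(n)}(y) ≥ L`, then for consecutive chain points
`zⱼ, zⱼ₊₁` at distance `≤ s`, any `y ∈ B(zⱼ, s)` and `h ∈ B(zⱼ₊₁, s)` satisfy `N (y⁻¹ * h) ≤ 3s`.
Keeping in `ν^{((j+1)n)} = ν^{(jn)} * ν^{(n)}` only the terms with `y ∈ B(zⱼ, s)` gives, by
induction along the chain, `ν^{(Mn)}(x) ≥ V(s)^{M-1} L^M`. With `s = η r(n)/4` and
`L = c₁ / V(r(n))`, doubling of `V` gives `V(r(n)) ≤ K V(s)` for a `K` independent of `n`, so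
`ν^{(Mn)}(x) ≥ c₁ (c₁ / K)^{M-1} / V(r(n))`, and `M ≤ M_κ` makes the constant uniform.
-/

/-- `convPow` for `ℝ≥0∞`-valued densities, where Fubini for `tsum` holds unconditionally. -/
noncomputable def convPowENNReal {G : Type*} [Group G] (μ : G → ℝ≥0∞) : ℕ → G → ℝ≥0∞
  | 0 => fun g => if g = 1 then 1 else 0
  | n + 1 => fun g => ∑' h : G, μ h * convPowENNReal μ n (h⁻¹ * g)

theorem tsum_ofReal_eq_one {G : Type*} {ν : G → ℝ} (hν0 : ∀ g, 0 ≤ ν g)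
    (hprob : ∑' g, ν g = 1) :
    ∑' g, ENNReal.ofReal (ν g) = 1 := by
  have hsum : Summable ν := by
    by_contra h
    simp [tsum_eq_zero_of_not_summable h] at hprob
  rw [← ENNReal.ofReal_tsum_of_nonneg hν0 hsum, hprob, ENNReal.ofReal_one]

section ConvPow

variable {G : Type*} [Group G]

theorem tsum_convPowENNReal {μ : G → ℝ≥0∞} (hμ : ∑' g, μ g = 1) (n : ℕ) :
    ∑' g, convPowENNReal μ n g = 1 := by
  induction n with
  | zero => simp [convPowENNReal]
  | succ n ih =>
    calc ∑' g, ∑' h, μ h * convPowENNReal μ n (h⁻¹ * g)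
        = ∑' h, μ h * ∑' g, convPowENNReal μ n (h⁻¹ * g) := by
          rw [ENNReal.tsum_comm]
          exact tsum_congr fun h => ENNReal.tsum_mul_left
      _ = ∑' h, μ h := by
          refine tsum_congr fun h => ?_
          rw [show ∑' g, convPowENNReal μ n (h⁻¹ * g) = 1 from
            ((Equiv.mulLeft h⁻¹).tsum_eq _).trans ih, mul_one]
      _ = 1 := hμ

theorem convPowENNReal_le_one {μ : G → ℝ≥0∞} (hμ : ∑' g, μ g = 1) (n : ℕ) (g : G) :
    convPowENNReal μ n g ≤ 1 :=
  tsum_convPowENNReal hμ n ▸ ENNReal.le_tsum g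

theorem convPowENNReal_ne_top {μ : G → ℝ≥0∞} (hμ : ∑' g, μ g = 1) (n : ℕ) (g : G) :
    convPowENNReal μ n g ≠ ⊤ :=
  ne_top_of_le_ne_top ENNReal.one_ne_top (convPowENNReal_le_one hμ n g)

theorem convPowENNReal_add (μ : G → ℝ≥0∞) (a b : ℕ) (g : G) :
    convPowENNReal μ (a + b) g =
      ∑' y, convPowENNReal μ a y * convPowENNReal μ b (y⁻¹ * g) := by
  induction a generalizing g with
  | zero =>
    rw [Nat.zero_add, tsum_eq_single 1 fun y hy => by simp [convPowENNReal, hy]]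
    simp [convPowENNReal]
  | succ a ih =>
    rw [Nat.add_right_comm]
    calc ∑' h, μ h * convPowENNReal μ (a + b) (h⁻¹ * g)
        = ∑' h, ∑' y, μ h * (convPowENNReal μ a (h⁻¹ * (h * y)) *
            convPowENNReal μ b ((h * y)⁻¹ * g)) := by
          refine tsum_congr fun h => ?_
          simp only [ih, ← ENNReal.tsum_mul_left, inv_mul_cancel_left, mul_inv_rev, mul_assoc]
      _ = ∑' h, ∑' w, μ h * (convPowENNReal μ a (h⁻¹ * w) *
            convPowENNReal μ b (w⁻¹ * g)) :=
          tsum_congr fun h => (Equiv.mulLeft h).tsum_eq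
            fun w => μ h * (convPowENNReal μ a (h⁻¹ * w) * convPowENNReal μ b (w⁻¹ * g))
      _ = ∑' w, (∑' h, μ h * convPowENNReal μ a (h⁻¹ * w)) * convPowENNReal μ b (w⁻¹ * g) := by
          rw [ENNReal.tsum_comm]
          refine tsum_congr fun w => ?_
          rw [← ENNReal.tsum_mul_right]
          exact tsum_congr fun h => (mul_assoc _ _ _).symm

theorem card_mul_le_convPowENNReal_add (μ : G → ℝ≥0∞) {S : Set G} (hS : S.Finite)
    {a b : ℕ} {g : G} {A B : ℝ≥0∞} (hA : ∀ y ∈ S, A ≤ convPowENNReal μ a y)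
    (hB : ∀ y ∈ S, B ≤ convPowENNReal μ b (y⁻¹ * g)) :
    (S.ncard : ℝ≥0∞) * (A * B) ≤ convPowENNReal μ (a + b) g := by
  rw [convPowENNReal_add, Set.ncard_eq_toFinset_card S hS, ← nsmul_eq_mul, ← Finset.sum_const]
  refine le_trans (Finset.sum_le_sum fun y hy => ?_) (ENNReal.sum_le_tsum hS.toFinset)
  rw [Set.Finite.mem_toFinset] at hy
  exact mul_le_mul' (hA y hy) (hB y hy)

theorem convPow_eq_toReal {ν : G → ℝ} (hν0 : ∀ g, 0 ≤ ν g) (hprob : ∑' g, ν g = 1)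
    (n : ℕ) (g : G) :
    convPow ν n g = (convPowENNReal (fun g => ENNReal.ofReal (ν g)) n g).toReal := by
  induction n generalizing g with
  | zero => by_cases hg : g = 1 <;> simp [convPow, convPowENNReal, hg]
  | succ n ih =>
    simp only [convPow, convPowENNReal]
    rw [ENNReal.tsum_toReal_eq fun h => ENNReal.mul_ne_top ENNReal.ofReal_ne_top
      (convPowENNReal_ne_top (tsum_ofReal_eq_one hν0 hprob) _ _)]
    exact tsum_congr fun h => by rw [ENNReal.toReal_mul, ENNReal.toReal_ofReal (hν0 h), ih]

end ConvPow

section Chain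

variable {G : Type*} [Group G] {N : G → ℝ}

theorem setOf_inv_mul_le_eq_image (w : G) (s : ℝ) :
    {y | N (w⁻¹ * y) ≤ s} = (w * ·) '' {g | N g ≤ s} := by
  rw [Set.image_mul_left]
  rfl

theorem ncard_setOf_inv_mul_le (w : G) (s : ℝ) :
    {y | N (w⁻¹ * y) ≤ s}.ncard = {g | N g ≤ s}.ncard := by
  rw [setOf_inv_mul_le_eq_image, Set.ncard_image_of_injective _ (mul_right_injective w)]

theorem le_inv_mul_add_inv_mul (hsub : ∀ g h, N (g * h) ≤ N g + N h) (a b c : G) :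
    N (a⁻¹ * c) ≤ N (a⁻¹ * b) + N (b⁻¹ * c) := by
  simpa [mul_assoc] using hsub (a⁻¹ * b) (b⁻¹ * c)

variable {μ : G → ℝ≥0∞} {n M : ℕ} {s : ℝ} {z : ℕ → G}

theorem pow_mul_pow_le_convPowENNReal_of_chain (hsub : ∀ g h, N (g * h) ≤ N g + N h)
    (hNsymm : ∀ g, N g⁻¹ = N g) (hs : 0 ≤ s) (hball : {g | N g ≤ s}.Finite) {L : ℝ≥0∞}
    (hL : ∀ y, N y ≤ 3 * s → L ≤ convPowENNReal μ n y) (hz0 : z 0 = 1)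
    (hstep : ∀ i < M, N ((z i)⁻¹ * z (i + 1)) ≤ s) :
    ∀ j < M, ∀ h, N ((z (j + 1))⁻¹ * h) ≤ s →
      ({g | N g ≤ s}.ncard : ℝ≥0∞) ^ j * L ^ (j + 1) ≤ convPowENNReal μ ((j + 1) * n) h := by
  intro j
  induction j with
  | zero =>
    intro hM h hh
    have hz1 : N (z 1) ≤ s := by simpa [hz0] using hstep 0 hM
    have := le_inv_mul_add_inv_mul hsub 1 (z 1) h
    simp only [inv_one, one_mul] at this
    simpa using hL h (by linarith)
  | succ j ih =>
    intro hM h hh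
    have hcard := ncard_setOf_inv_mul_le (N := N) (z (j + 1)) s
    have hclose : ∀ y ∈ {y | N ((z (j + 1))⁻¹ * y) ≤ s}, L ≤ convPowENNReal μ n (y⁻¹ * h) := by
      intro y hy
      have h₁ := le_inv_mul_add_inv_mul hsub y (z (j + 1)) h
      have h₂ := le_inv_mul_add_inv_mul hsub (z (j + 1)) (z (j + 2)) h
      have h₃ : N (y⁻¹ * z (j + 1)) = N ((z (j + 1))⁻¹ * y) := by
        rw [← hNsymm, mul_inv_rev, inv_inv]
      have := hstep (j + 1) hM
      exact hL _ (by simp only [Set.mem_ofPred_eq] at hy; linarith)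
    have hfin : {y | N ((z (j + 1))⁻¹ * y) ≤ s}.Finite := by
      rw [setOf_inv_mul_le_eq_image]
      exact hball.image _
    calc ({g | N g ≤ s}.ncard : ℝ≥0∞) ^ (j + 1) * L ^ (j + 1 + 1)
        = ({y | N ((z (j + 1))⁻¹ * y) ≤ s}.ncard : ℝ≥0∞) *
            (({g | N g ≤ s}.ncard : ℝ≥0∞) ^ j * L ^ (j + 1) * L) := by
          rw [hcard]; ring
      _ ≤ convPowENNReal μ ((j + 1) * n + n) h :=
          card_mul_le_convPowENNReal_add μ hfin (fun y hy => ih (by omega) y hy) hclose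
      _ = convPowENNReal μ ((j + 1 + 1) * n) h := by rw [Nat.succ_mul (j + 1)]

theorem vol_pow_mul_pow_le_convPow_of_chain {ν : G → ℝ} (hν0 : ∀ g, 0 ≤ ν g)
    (hprob : ∑' g, ν g = 1) (hsub : ∀ g h, N (g * h) ≤ N g + N h)
    (hNsymm : ∀ g, N g⁻¹ = N g) (hs : 0 ≤ s) (hball : {g | N g ≤ s}.Finite) {L : ℝ}
    (hL0 : 0 ≤ L) (hL : ∀ y, N y ≤ 3 * s → L ≤ convPow ν n y) {m : ℕ} (hz0 : z 0 = 1)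
    (hstep : ∀ i < m + 1, N ((z i)⁻¹ * z (i + 1)) ≤ s) (h : G)
    (hh : N ((z (m + 1))⁻¹ * h) ≤ s) :
    vol N s ^ m * L ^ (m + 1) ≤ convPow ν ((m + 1) * n) h := by
  have hμ := tsum_ofReal_eq_one hν0 hprob
  have hLE : ∀ y, N y ≤ 3 * s →
      ENNReal.ofReal L ≤ convPowENNReal (fun g => ENNReal.ofReal (ν g)) n y := fun y hy =>
    (ENNReal.ofReal_le_iff_le_toReal (convPowENNReal_ne_top hμ n y)).2
      (convPow_eq_toReal hν0 hprob n y ▸ hL y hy)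
  have key := pow_mul_pow_le_convPowENNReal_of_chain hsub hNsymm hs hball hLE hz0 hstep m
    (Nat.lt_succ_self m) h hh
  rw [convPow_eq_toReal hν0 hprob]
  convert ENNReal.toReal_mono (convPowENNReal_ne_top hμ _ _) key
  simp [ENNReal.toReal_ofReal hL0, vol]

end Chain

section Volume

variable {G : Type*} {N : G → ℝ}

theorem one_le_vol [One G] (h1 : N 1 = 0) {s : ℝ} (hfin : {g | N g ≤ s}.Finite) (hs : 0 ≤ s) :
    1 ≤ vol N s := by
  have : 0 < {g | N g ≤ s}.ncard := (Set.ncard_pos hfin).2 ⟨1, by simpa [h1] using hs⟩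
  unfold vol
  exact_mod_cast this

theorem vol_mono {s t : ℝ} (hfin : {g | N g ≤ t}.Finite) (hst : s ≤ t) : vol N s ≤ vol N t := by
  unfold vol
  exact_mod_cast Set.ncard_le_ncard (fun g hg => le_trans hg hst) hfin

theorem vol_two_pow_mul_le {CV : ℝ} (hCV : 0 ≤ CV)
    (hVdoub : ∀ s : ℝ, 0 < s → vol N (2 * s) ≤ CV * vol N s) (k : ℕ) {s : ℝ} (hs : 0 < s) :
    vol N (2 ^ k * s) ≤ CV ^ k * vol N s := by
  induction k with
  | zero => simp
  | succ k ih =>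
    calc vol N (2 ^ (k + 1) * s) = vol N (2 * (2 ^ k * s)) := by ring_nf
      _ ≤ CV * vol N (2 ^ k * s) := hVdoub _ (by positivity)
      _ ≤ CV * (CV ^ k * vol N s) := mul_le_mul_of_nonneg_left ih hCV
      _ = CV ^ (k + 1) * vol N s := by ring

theorem exists_vol_le_mul_vol [One G] (h1 : N 1 = 0) (hfin : ∀ s : ℝ, {g | N g ≤ s}.Finite)
    {CV : ℝ} (hVdoub : ∀ s : ℝ, 0 < s → vol N (2 * s) ≤ CV * vol N s) {c : ℝ} (hc : 0 < c) :
    ∃ K ≥ 1, ∀ s > 0, vol N s ≤ K * vol N (c * s) := by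
  have hV1 := one_le_vol h1 (hfin 1) zero_le_one
  have hCV : 1 ≤ CV := by
    have hmono := vol_mono (hfin 2) (by norm_num : (1 : ℝ) ≤ 2)
    have hdoub := hVdoub 1 one_pos
    rw [mul_one] at hdoub
    nlinarith
  obtain ⟨k, hk⟩ := pow_unbounded_of_one_lt (1 / c) (one_lt_two (α := ℝ))
  refine ⟨CV ^ k, one_le_pow₀ hCV, fun s hs => ?_⟩
  have hcs : s ≤ 2 ^ k * (c * s) := by
    have : 1 ≤ 2 ^ k * c := by rw [div_lt_iff₀ hc] at hk; exact hk.le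
    nlinarith
  exact (vol_mono (hfin _) hcs).trans (vol_two_pow_mul_le (by linarith) hVdoub k (by positivity))

end Volume

theorem min_one_div_pow_div_le {V W K c : ℝ} (hV : 0 < V) (hK : 1 ≤ K) (hc : 0 < c)
    (hVW : V ≤ K * W) {m M : ℕ} (hm : m ≤ M) :
    min 1 (c / K) ^ (M + 1) / V ≤ W ^ m * (c / V) ^ (m + 1) := by
  have hK0 : 0 < K := by linarith
  have hq : 0 < min 1 (c / K) := lt_min one_pos (by positivity)
  have hqc : min 1 (c / K) ≤ c := (min_le_right _ _).trans (div_le_self hc.le hK)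
  calc min 1 (c / K) ^ (M + 1) / V
      ≤ min 1 (c / K) * min 1 (c / K) ^ m / V := by
        rw [← pow_succ']
        exact div_le_div_of_nonneg_right
          (pow_le_pow_of_le_one hq.le (min_le_left _ _) (by omega)) hV.le
    _ ≤ c * (c / K) ^ m / V := by gcongr; exact min_le_right _ _
    _ = (V / K) ^ m * (c / V) ^ (m + 1) := by
        rw [div_pow, div_pow, div_pow]
        field_simp
        ring
    _ ≤ W ^ m * (c / V) ^ (m + 1) := by
        gcongr
        rwa [div_le_iff₀ hK0, mul_comm]

theorem chaining_lower_bound_general {G : Type*} [Group G]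
    (N : G → ℝ)
    (hzero : ∀ g, N g = 0 ↔ g = 1)
    (hsub : ∀ g h, N (g * h) ≤ N g + N h)
    (hNsymm : ∀ g, N g⁻¹ = N g)
    (hfin : ∀ s : ℝ, {g : G | N g ≤ s}.Finite)
    (CV : ℝ) (hVdoub : ∀ s : ℝ, 0 < s → vol N (2 * s) ≤ CV * vol N s)
    (r : ℝ → ℝ) (hrpos : ∀ t > 0, 0 < r t)
    (ν : G → ℝ) (hν0 : ∀ g, 0 ≤ ν g)
    (hprob : ∑' g, ν g = 1)
    (η c₁ : ℝ) (hη : 0 < η) (hc₁ : 0 < c₁)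
    (hlow : ∀ n : ℕ, 1 ≤ n → ∀ x : G, N x ≤ η * r n →
      c₁ / vol N (r n) ≤ convPow ν n x)
    (κ : ℝ) (Mκ : ℕ)
    (hchain : ∀ n : ℕ, 1 ≤ n → ∀ x : G, N x ≤ κ * r n →
      ∃ (M : ℕ) (z : ℕ → G), M ≤ Mκ ∧ z 0 = 1 ∧ z M = x ∧
        ∀ i < M, N ((z i)⁻¹ * z (i + 1)) ≤ η * r n / 4) :
    ∃ c : ℝ, 0 < c ∧ ∀ n : ℕ, 1 ≤ n → ∀ x : G, N x ≤ κ * r n →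
      ∃ M : ℕ, M ≤ Mκ ∧ c / vol N (r n) ≤ convPow ν (M * n) x := by
  have h1 : N 1 = 0 := (hzero 1).2 rfl
  obtain ⟨K, hK, hVK⟩ := exists_vol_le_mul_vol h1 hfin hVdoub (by positivity : 0 < η / 4)
  refine ⟨min 1 (c₁ / K) ^ (Mκ + 1), pow_pos (lt_min one_pos (by positivity)) _,
    fun n hn x hx => ?_⟩
  obtain ⟨M, z, hM, hz0, rfl, hstep⟩ := hchain n hn x hx
  refine ⟨M, hM, ?_⟩
  have hrn : 0 < r n := hrpos n (by exact_mod_cast hn)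
  have hV := one_le_vol h1 (hfin _) hrn.le
  have hs : 0 ≤ η * r n / 4 := by positivity
  cases M with
  | zero =>
    simp only [hz0, zero_mul, convPow, if_true]
    exact div_le_one_of_le₀ ((pow_le_one₀ (by positivity) (min_le_left _ _)).trans hV)
      (by positivity)
  | succ m =>
    refine (min_one_div_pow_div_le (by linarith) hK hc₁ ?_ (by omega)).trans
      (vol_pow_mul_pow_le_convPow_of_chain hν0 hprob hsub hNsymm hs (hfin _) (by positivity)
        (fun y hy => hlow n hn y (by linarith)) hz0 hstep _ (by simpa [h1] using hs))
    simpa only [div_mul_eq_mul_div] using hVK (r n) hrn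

/-- The chaining step in the proof of Proposition 3.5: near-diagonal lower bounds at scale
`η r(n)`, a uniform upper bound, and chains of at most `M_κ` steps of size `η r(n)/4` yield a
lower bound `ν^{(Mn)}(x) ≥ c(κ) V(r(n))⁻¹` for all `‖x‖ ≤ κ r(n)` (some `M ≤ M_κ`). -/
theorem chaining_lower_bound {G : Type*} [Group G] [Countable G]
    (N : G → ℝ)
    (hnonneg : ∀ g, 0 ≤ N g)
    (hzero : ∀ g, N g = 0 ↔ g = 1)
    (hsub : ∀ g h, N (g * h) ≤ N g + N h)
    (hNsymm : ∀ g, N g⁻¹ = N g)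
    (hfin : ∀ s : ℝ, {g : G | N g ≤ s}.Finite)
    (CV : ℝ) (hVdoub : ∀ s : ℝ, 0 < s → vol N (2 * s) ≤ CV * vol N s)
    (r : ℝ → ℝ) (hrpos : ∀ t > 0, 0 < r t) (hrmono : StrictMonoOn r (Set.Ioi 0))
    (Cr : ℝ) (hrdoub : ∀ t > 0, r (2 * t) ≤ Cr * r t)
    (ν : G → ℝ) (hν0 : ∀ g, 0 ≤ ν g) (hνsymm : ∀ g, ν g⁻¹ = ν g)
    (hprob : ∑' g, ν g = 1)
    (η c₁ C₁ : ℝ) (hη : 0 < η) (hc₁ : 0 < c₁)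
    (hlow : ∀ n : ℕ, 1 ≤ n → ∀ x : G, N x ≤ η * r n →
      c₁ / vol N (r n) ≤ convPow ν n x)
    (hup : ∀ n : ℕ, 1 ≤ n → ∀ x : G, convPow ν n x ≤ C₁ / vol N (r n))
    (κ : ℝ) (hκ : 0 < κ) (Mκ : ℕ)
    (hchain : ∀ n : ℕ, 1 ≤ n → ∀ x : G, N x ≤ κ * r n →
      ∃ (M : ℕ) (z : ℕ → G), M ≤ Mκ ∧ z 0 = 1 ∧ z M = x ∧
        ∀ i < M, N ((z i)⁻¹ * z (i + 1)) ≤ η * r n / 4) :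
    ∃ c : ℝ, 0 < c ∧ ∀ n : ℕ, 1 ≤ n → ∀ x : G, N x ≤ κ * r n →
      ∃ M : ℕ, M ≤ Mκ ∧ c / vol N (r n) ≤ convPow ν (M * n) x :=
  chaining_lower_bound_general N hzero hsub hNsymm hfin CV hVdoub r hrpos ν hν0 hprob η c₁ hη hc₁
    hlow κ Mκ hchain
end
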